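/- Let m be a positive integer, r ≥ 1, and s = (s_1,…,s_m), p = (p_1,…,p_m), q = (q_1,…,q_m) ∈ [1,∞)^m be such that 1/r − (1/p_1 + ⋯ + 1/p_m) + (1/q_1 + ⋯ + 1/q_m) > 0 and, for each k = 1,…,m, q_k ≥ p_k and 1/s_k − (1/q_k + ⋯ + 1/q_m) = 1/r − (1/p_k + ⋯ + 1/p_m). Let E_1,…,E_m, F be Banach spaces, let T : E_1 × ⋯ × E_m → F be a continuous m-linear operator, and let C > 0 be such that for every positive integer N and all finite families (x_j^{(k)})_{j=1}^N in E_k (k = 1,…,m), (∑_{j_1,…,j_m=1}^N ‖T(x_{j_1}^{(1)},…,x_{j_m}^{(m)})‖^r)^{1/r} ≤ C ∏_{k=1}^m ‖(x_j^{(k)})_{j=1}^N‖_{w,p_k}. Then for every positive integer N and all finite families (x_j^{(k)})_{j=1}^N in E_k, the iterated mixed norm satisfies (∑_{j_1=1}^N (⋯ (∑_{j_m=1}^N ‖T(x_{j_1}^{(1)},…,x_{j_m}^{(m)})‖^{s_m})^{s_{m−1}/s_m} ⋯ )^{s_1/s_2})^{1/s_1} ≤ C ∏_{k=1}^m ‖(x_j^{(k)})_{j=1}^N‖_{w,q_k}.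 -/

import Mathlib

open Finset

/-- The weak `ℓ_t` norm of a finite family `x_1, …, x_N` in a normed space `E`:
`sup { (∑_{j=1}^N |φ(x_j)|^t)^{1/t} : φ ∈ E*, ‖φ‖ ≤ 1 }`. -/
noncomputable def weakNorm (𝕂 : Type*) {E : Type*} [RCLike 𝕂] [NormedAddCommGroup E]
    [NormedSpace 𝕂 E] (t : ℝ) {N : ℕ} (x : Fin N → E) : ℝ :=
  ⨆ φ : { φ : E →L[𝕂] 𝕂 // ‖φ‖ ≤ 1 }, (∑ j, ‖(φ : E →L[𝕂] 𝕂) (x j)‖ ^ t) ^ (1 / t)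

/-- The iterated mixed `ℓ_{s_1}(ℓ_{s_2}(⋯(ℓ_{s_m})))` norm of a scalar family indexed by
`(Fin N)^m`:
`(∑_{j_1} ( ⋯ (∑_{j_m} f(j_1,…,j_m)^{s_m})^{s_{m-1}/s_m} ⋯ )^{s_1/s_2})^{1/s_1}`. -/
noncomputable def mixedNorm {N : ℕ} : (m : ℕ) → (Fin m → ℝ) → ((Fin m → Fin N) → ℝ) → ℝ
  | 0, _, f => f (fun i => i.elim0)
  | m + 1, s, f =>
      (∑ j : Fin N,
        mixedNorm m (fun i => s i.succ) (fun jr => f (Fin.cons j jr)) ^ s 0) ^ (1 / s 0)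

/-!
Induction on `m`, peeling off the outermost variable. Fix any family `x₀` in `E₁` and put
`1/ρ = 1/s₁ + 1/p₁ - 1/q₁`. The `ℓ_ρ^N(F)`-valued `(m-1)`-linear map `y ↦ (T (x₀ j, y))_j` is
multiple `(r; p₂, …, pₘ)`-summing with constant `C ‖x₀‖_{w,p₁}`, because `ρ ≥ r`; by the induction
hypothesis and Minkowski's inequality (`ρ ≥ sₖ` for `k ≥ 2`), the `ℓ_ρ` norm over `j₁` of the inner
mixed norms is at most `C ‖x₀‖_{w,p₁} ∏_{k ≥ 2} ‖x⁽ᵏ⁾‖_{w,qₖ}`. If `p₁ = q₁`, then `ρ = s₁` and we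
take `x₀ = x⁽¹⁾`. Otherwise take `x₀ = (aⱼ x⁽¹⁾ⱼ)ⱼ` with the extremal weights `a` of Hölder's
inequality for `1/ρ = 1/t + 1/s₁`, which turn the `ℓ_ρ` norm into the `ℓ_{s₁}` norm; Hölder again
gives `‖x₀‖_{w,p₁} ≤ ‖x⁽¹⁾‖_{w,q₁}`, since `1/p₁ = 1/t + 1/q₁` and `‖a‖_t ≤ 1`.
-/

lemma sum_rpow_le_rpow_sum {ι : Type*} (s : Finset ι) {f : ι → ℝ} (hf : ∀ i, 0 ≤ f i)
    {c : ℝ} (hc : 1 ≤ c) : ∑ i ∈ s, f i ^ c ≤ (∑ i ∈ s, f i) ^ c := by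
  have hsplit : ∀ x : ℝ, 0 ≤ x → x ^ c = x * x ^ (c - 1) := fun x hx => by
    rw [← Real.rpow_one_add' hx (by linarith), add_sub_cancel]
  calc ∑ i ∈ s, f i ^ c = ∑ i ∈ s, f i * f i ^ (c - 1) :=
        sum_congr rfl fun i _ => hsplit _ (hf i)
    _ ≤ ∑ i ∈ s, f i * (∑ i ∈ s, f i) ^ (c - 1) := by
        refine sum_le_sum fun i hi => mul_le_mul_of_nonneg_left ?_ (hf i)
        exact Real.rpow_le_rpow (hf i) (single_le_sum (fun i _ => hf i) hi) (by linarith)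
    _ = (∑ i ∈ s, f i) ^ c := by
        rw [← sum_mul, ← hsplit _ (sum_nonneg fun i _ => hf i)]

lemma Lq_le_Lp_of_le {ι : Type*} [Fintype ι] {f : ι → ℝ} (hf : ∀ i, 0 ≤ f i) {p q : ℝ}
    (hp : 0 < p) (hpq : p ≤ q) : (∑ i, f i ^ q) ^ (1 / q) ≤ (∑ i, f i ^ p) ^ (1 / p) := by
  have hq : 0 < q := hp.trans_le hpq
  have hpow : ∑ i, f i ^ q ≤ (∑ i, f i ^ p) ^ (q / p) := by
    simpa only [← Real.rpow_mul (hf _), mul_div_cancel₀ _ hp.ne'] using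
      sum_rpow_le_rpow_sum univ (fun i => Real.rpow_nonneg (hf i) p) ((one_le_div hp).2 hpq)
  calc (∑ i, f i ^ q) ^ (1 / q) ≤ ((∑ i, f i ^ p) ^ (q / p)) ^ (1 / q) := by
        gcongr
        exact sum_nonneg fun i _ => Real.rpow_nonneg (hf i) q
    _ = (∑ i, f i ^ p) ^ (1 / p) := by
        rw [← Real.rpow_mul (sum_nonneg fun i _ => Real.rpow_nonneg (hf i) p)]
        congr 1
        field_simp

lemma Lp_sum_le_sum_Lp {ι κ : Type*} [Fintype ι] [Fintype κ] {u : ι → κ → ℝ}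
    (hu : ∀ i k, 0 ≤ u i k) {c : ℝ} (hc : 1 ≤ c) :
    (∑ k, (∑ i, u i k) ^ c) ^ (1 / c) ≤ ∑ i, (∑ k, u i k ^ c) ^ (1 / c) := by
  have : Fact (1 ≤ ENNReal.ofReal c) := ⟨ENNReal.one_le_ofReal.2 hc⟩
  have hc' : (ENNReal.ofReal c).toReal = c := ENNReal.toReal_ofReal (by linarith)
  have hnorm : ∀ v : κ → ℝ, (∀ k, 0 ≤ v k) →
      ‖WithLp.toLp (ENNReal.ofReal c) v‖ = (∑ k, v k ^ c) ^ (1 / c) := fun v hv => by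
    rw [PiLp.norm_eq_sum (by rw [hc']; linarith), hc']
    simp [Real.norm_of_nonneg (hv _)]
  have htriangle := norm_sum_le univ fun i => WithLp.toLp (ENNReal.ofReal c) (u i)
  rw [← WithLp.toLp_sum, hnorm _ fun k => ?_] at htriangle
  · simpa [hnorm _ (hu _)] using htriangle
  · simpa using sum_nonneg fun i _ => hu i k

lemma Lq_Lp_le_Lp_Lq {ι κ : Type*} [Fintype ι] [Fintype κ] {f : ι → κ → ℝ}
    (hf : ∀ i k, 0 ≤ f i k) {p q : ℝ} (hp : 0 < p) (hpq : p ≤ q) :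
    (∑ k, ((∑ i, f i k ^ p) ^ (1 / p)) ^ q) ^ (1 / q) ≤
      (∑ i, ((∑ k, f i k ^ q) ^ (1 / q)) ^ p) ^ (1 / p) := by
  have hq : 0 < q := hp.trans_le hpq
  have hpow : ∀ {x : ℝ} (a b : ℝ), 0 ≤ x → (x ^ (1 / a)) ^ b = x ^ (b / a) := fun a b hx => by
    rw [← Real.rpow_mul hx, one_div_mul_eq_div]
  have hmink := Lp_sum_le_sum_Lp (u := fun i k => f i k ^ p)
    (fun i k => Real.rpow_nonneg (hf i k) p) ((one_le_div hp).2 hpq)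
  simp only [← Real.rpow_mul (hf _ _), mul_div_cancel₀ _ hp.ne', one_div_div] at hmink
  have hinner : ∀ k, 0 ≤ ∑ i, f i k ^ p :=
    fun k => sum_nonneg fun i _ => Real.rpow_nonneg (hf i k) p
  have houter : 0 ≤ ∑ k, (∑ i, f i k ^ p) ^ (q / p) :=
    sum_nonneg fun k _ => Real.rpow_nonneg (hinner k) _
  calc (∑ k, ((∑ i, f i k ^ p) ^ (1 / p)) ^ q) ^ (1 / q)
      = ((∑ k, (∑ i, f i k ^ p) ^ (q / p)) ^ (p / q)) ^ (1 / p) := by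
        simp only [hpow _ _ (hinner _)]
        rw [← Real.rpow_mul houter]
        congr 1
        field_simp
    _ ≤ (∑ i, (∑ k, f i k ^ q) ^ (p / q)) ^ (1 / p) := by gcongr
    _ = (∑ i, ((∑ k, f i k ^ q) ^ (1 / q)) ^ p) ^ (1 / p) := by
        simp only [hpow _ _ (sum_nonneg fun k _ => Real.rpow_nonneg (hf _ k) q)]

lemma exists_Lp_le_Lr_mul_of_holderTriple {ι : Type*} [Fintype ι] {M : ι → ℝ}
    (hM : ∀ j, 0 ≤ M j) {t p r : ℝ} (h : t.HolderTriple p r) :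
    ∃ a : ι → ℝ, (∀ j, 0 ≤ a j) ∧ ∑ j, a j ^ t ≤ 1 ∧
      (∑ j, M j ^ p) ^ (1 / p) ≤ (∑ j, (a j * M j) ^ r) ^ (1 / r) := by
  obtain ⟨ht, hp, hr⟩ := h.all_pos
  set H := ∑ j, M j ^ p
  have hH : 0 ≤ H := sum_nonneg fun j _ => Real.rpow_nonneg (hM j) p
  rcases hH.eq_or_lt with hH0 | hH0
  · refine ⟨0, fun _ => le_rfl, by simp [Real.zero_rpow ht.ne'], ?_⟩
    rw [← hH0, Real.zero_rpow (one_div_ne_zero hp.ne')]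
    exact Real.rpow_nonneg (sum_nonneg fun j _ => Real.rpow_nonneg (by simp) r) _
  have hexp : p * (r / t) + r = p := by
    have := h.inv_add_inv_eq_inv; field_simp at this ⊢; linarith
  have hexp' : r / p = 1 - r / t := by
    have := h.inv_add_inv_eq_inv; field_simp at this ⊢; linarith
  have hw : ∀ j, 0 ≤ M j ^ p / H := fun j => div_nonneg (Real.rpow_nonneg (hM j) p) hH
  -- the extremal weights of Hölder's inequality
  refine ⟨fun j => (M j ^ p / H) ^ (1 / t), fun j => Real.rpow_nonneg (hw j) _, ?_, le_of_eq ?_⟩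
  · simp only [← Real.rpow_mul (hw _), one_div_mul_cancel ht.ne', Real.rpow_one, ← sum_div]
    exact (div_self hH0.ne').le
  have hterm : ∀ j, ((M j ^ p / H) ^ (1 / t) * M j) ^ r = M j ^ p / H ^ (r / t) := fun j => by
    rw [Real.mul_rpow (Real.rpow_nonneg (hw j) _) (hM j), ← Real.rpow_mul (hw j),
      one_div_mul_eq_div, Real.div_rpow (Real.rpow_nonneg (hM j) p) hH, ← Real.rpow_mul (hM j),
      div_mul_eq_mul_div, ← Real.rpow_add' (hM j) (by rw [hexp]; exact hp.ne'), hexp]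
  calc H ^ (1 / p) = (H ^ (r / p)) ^ (1 / r) := by
        rw [← Real.rpow_mul hH]; congr 1; field_simp
    _ = (H / H ^ (r / t)) ^ (1 / r) := by
        rw [hexp', Real.rpow_sub hH0, Real.rpow_one]
    _ = _ := by simp only [hterm, ← sum_div]; rfl

section MixedNorm

variable {N : ℕ}

lemma mixedNorm_nonneg : ∀ {m : ℕ} (s : Fin m → ℝ) {f : (Fin m → Fin N) → ℝ},
    (∀ j, 0 ≤ f j) → 0 ≤ mixedNorm m s f
  | 0, _, _, hf => hf _
  | _ + 1, _, _, hf => Real.rpow_nonneg (sum_nonneg fun _ _ => Real.rpow_nonneg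
      (mixedNorm_nonneg _ fun _ => hf _) _) _

lemma mixedNorm_const_mul : ∀ {m : ℕ} {s : Fin m → ℝ} {f : (Fin m → Fin N) → ℝ} {c : ℝ},
    (∀ i, s i ≠ 0) → (∀ j, 0 ≤ f j) → 0 ≤ c →
    mixedNorm m s (fun j => c * f j) = c * mixedNorm m s f
  | 0, _, _, _, _, _, _ => rfl
  | m + 1, s, f, c, hs, hf, hc => by
    have hM : ∀ j, 0 ≤ mixedNorm m (fun i => s i.succ) (fun jr => f (Fin.cons j jr)) :=
      fun j => mixedNorm_nonneg _ fun _ => hf _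
    simp only [mixedNorm, mixedNorm_const_mul (fun i => hs i.succ) (fun _ => hf _) hc,
      Real.mul_rpow hc (hM _), ← mul_sum]
    rw [Real.mul_rpow (Real.rpow_nonneg hc _) (sum_nonneg fun j _ => Real.rpow_nonneg (hM j) _),
      one_div, Real.rpow_rpow_inv hc (hs 0)]

lemma Lp_mixedNorm_le_mixedNorm_Lp {ι : Type*} [Fintype ι] {β : ℝ} :
    ∀ {m : ℕ} {s : Fin m → ℝ} {g : (Fin m → Fin N) → ι → ℝ},
    (∀ i, 0 < s i) → (∀ i, s i ≤ β) → (∀ j i, 0 ≤ g j i) →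
    (∑ i, mixedNorm m s (fun j => g j i) ^ β) ^ (1 / β) ≤
      mixedNorm m s (fun j => (∑ i, g j i ^ β) ^ (1 / β))
  | 0, _, _, _, _, _ => le_rfl
  | m + 1, s, g, hs, hsβ, hg => by
    have hM : ∀ j i, 0 ≤ mixedNorm m (fun i => s i.succ) fun jr => g (Fin.cons j jr) i :=
      fun j i => mixedNorm_nonneg _ fun _ => hg _ _
    have hLβ : ∀ j, 0 ≤ (∑ i, mixedNorm m (fun i => s i.succ)
        (fun jr => g (Fin.cons j jr) i) ^ β) ^ (1 / β) :=
      fun j => Real.rpow_nonneg (sum_nonneg fun i _ => Real.rpow_nonneg (hM j i) _) _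
    simp only [mixedNorm]
    refine (Lq_Lp_le_Lp_Lq hM (hs 0) (hsβ 0)).trans <| Real.rpow_le_rpow
      (sum_nonneg fun j _ => Real.rpow_nonneg (hLβ j) _) (sum_le_sum fun j _ => ?_)
      (one_div_nonneg.2 (hs 0).le)
    exact Real.rpow_le_rpow (hLβ j) (Lp_mixedNorm_le_mixedNorm_Lp (fun i => hs i.succ)
      (fun i => hsβ i.succ) fun _ _ => hg _ _) (hs 0).le

end MixedNorm

section WeakNorm

variable {𝕂 E : Type*} [RCLike 𝕂] [NormedAddCommGroup E] [NormedSpace 𝕂 E] {N : ℕ}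

lemma weakNorm_nonneg (t : ℝ) (x : Fin N → E) : 0 ≤ weakNorm 𝕂 t x :=
  Real.iSup_nonneg fun _ =>
    Real.rpow_nonneg (sum_nonneg fun _ _ => Real.rpow_nonneg (norm_nonneg _) _) _

lemma le_weakNorm {t : ℝ} (ht : 0 ≤ t) (x : Fin N → E) {φ : E →L[𝕂] 𝕂} (hφ : ‖φ‖ ≤ 1) :
    (∑ j, ‖φ (x j)‖ ^ t) ^ (1 / t) ≤ weakNorm 𝕂 t x := by
  refine le_ciSup (f := fun φ : { φ : E →L[𝕂] 𝕂 // ‖φ‖ ≤ 1 } =>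
    (∑ j, ‖(φ : E →L[𝕂] 𝕂) (x j)‖ ^ t) ^ (1 / t)) ⟨(∑ j, ‖x j‖ ^ t) ^ (1 / t), ?_⟩ ⟨φ, hφ⟩
  rintro _ ⟨ψ, rfl⟩
  refine Real.rpow_le_rpow (sum_nonneg fun _ _ => Real.rpow_nonneg (norm_nonneg _) _)
    (sum_le_sum fun j _ => Real.rpow_le_rpow (norm_nonneg _) ?_ ht) (by positivity)
  simpa using ψ.1.le_of_opNorm_le ψ.2 (x j)

lemma weakNorm_le {t B : ℝ} {x : Fin N → E}
    (h : ∀ φ : E →L[𝕂] 𝕂, ‖φ‖ ≤ 1 → (∑ j, ‖φ (x j)‖ ^ t) ^ (1 / t) ≤ B) :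
    weakNorm 𝕂 t x ≤ B :=
  have : Nonempty { φ : E →L[𝕂] 𝕂 // ‖φ‖ ≤ 1 } := ⟨⟨0, by simp⟩⟩
  ciSup_le fun φ => h φ φ.2

lemma weakNorm_smul_le {t p q : ℝ} (h : t.HolderTriple q p) {a : Fin N → ℝ}
    (ha : ∀ j, 0 ≤ a j) (hat : ∑ j, a j ^ t ≤ 1) (x : Fin N → E) :
    weakNorm 𝕂 p (fun j => (a j : 𝕂) • x j) ≤ weakNorm 𝕂 q x := by
  obtain ⟨ht, hq, hp⟩ := h.all_pos
  refine weakNorm_le fun φ hφ => ?_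
  have hφx : ∀ j, 0 ≤ ‖φ (x j)‖ := fun j => norm_nonneg _
  have hS : 0 ≤ ∑ j, ‖φ (x j)‖ ^ q := sum_nonneg fun j _ => Real.rpow_nonneg (hφx j) q
  have hSa : 0 ≤ ∑ j, a j ^ t := sum_nonneg fun j _ => Real.rpow_nonneg (ha j) t
  have holder := Real.Lr_rpow_le_Lp_mul_Lq_of_nonneg univ h (fun j _ => ha j) fun j _ => hφx j
  calc (∑ j, ‖φ ((a j : 𝕂) • x j)‖ ^ p) ^ (1 / p)
      = (∑ j, (a j * ‖φ (x j)‖) ^ p) ^ (1 / p) := by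
        simp only [map_smul, norm_smul, RCLike.norm_ofReal, abs_of_nonneg (ha _)]
    _ ≤ ((∑ j, a j ^ t) ^ (p / t) * (∑ j, ‖φ (x j)‖ ^ q) ^ (p / q)) ^ (1 / p) := by
        gcongr
        exact sum_nonneg fun j _ => Real.rpow_nonneg (mul_nonneg (ha j) (hφx j)) p
    _ ≤ ((∑ j, ‖φ (x j)‖ ^ q) ^ (p / q)) ^ (1 / p) := by
        gcongr
        exact mul_le_of_le_one_left (Real.rpow_nonneg hS _)
          (Real.rpow_le_one hSa hat (by positivity))
    _ = (∑ j, ‖φ (x j)‖ ^ q) ^ (1 / q) := by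
        rw [← Real.rpow_mul hS]; congr 1; field_simp
    _ ≤ weakNorm 𝕂 q x := le_weakNorm hq.le x hφ

lemma exists_weight_Lp_le_Lr_mul_and_weakNorm_smul_le {M : Fin N → ℝ} (hM : ∀ j, 0 ≤ M j)
    {s r p q : ℝ} (hs : 0 < s) (hp : 0 < p) (hpq : p ≤ q)
    (hr : 1 / r = 1 / s + (1 / p - 1 / q)) :
    ∃ a : Fin N → ℝ, (∀ j, 0 ≤ a j) ∧
      (∑ j, M j ^ s) ^ (1 / s) ≤ (∑ j, (a j * M j) ^ r) ^ (1 / r) ∧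
      ∀ x : Fin N → E, weakNorm 𝕂 p (fun j => (a j : 𝕂) • x j) ≤ weakNorm 𝕂 q x := by
  rcases hpq.eq_or_lt with rfl | hpq
  · obtain rfl : r = s := by simpa using hr
    exact ⟨1, fun _ => zero_le_one, by simp, fun x => by simp⟩
  have hδ : 0 < 1 / p - 1 / q := sub_pos.2 (one_div_lt_one_div_of_lt hp hpq)
  have hts : (1 / p - 1 / q)⁻¹.HolderTriple s r :=
    ⟨by rw [inv_inv, ← one_div, ← one_div, hr]; ring, inv_pos.2 hδ, hs⟩
  have htq : (1 / p - 1 / q)⁻¹.HolderTriple q p :=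
    ⟨by rw [inv_inv]; simp only [one_div]; ring, inv_pos.2 hδ, hp.trans hpq⟩
  obtain ⟨a, ha, hat, hMa⟩ := exists_Lp_le_Lr_mul_of_holderTriple hM hts
  exact ⟨a, ha, hMa, weakNorm_smul_le htq ha hat⟩

end WeakNorm

lemma Fin.apply_cons_eq_cons {m : ℕ} {α : Fin (m + 1) → Type*} {β : Type*}
    (x : ∀ k, β → α k) (b : β) (c : Fin m → β) :
    (fun k => x k ((Fin.cons b c : Fin (m + 1) → β) k)) =
      Fin.cons (x 0 b) fun k => x k.succ (c k) := by
  funext k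
  cases k using Fin.cases <;> rfl

lemma Fintype.sum_fin_succ_pi {α M : Type*} [Fintype α] [AddCommMonoid M] {m : ℕ}
    (g : (Fin (m + 1) → α) → M) : ∑ j, g j = ∑ j₀, ∑ j : Fin m → α, g (Fin.cons j₀ j) := by
  rw [← Fintype.sum_prod_type']
  exact (Fintype.sum_equiv (Fin.consEquiv fun _ => α) _ _ fun _ => rfl).symm

/-- The defining inequality of multiple `(r; p₁, …, pₘ)`-summing operators with constant `C`,
tested on families of length `N`. -/
def IsMultipleSummingAt (𝕂 : Type*) [RCLike 𝕂] {m : ℕ} {E : Fin m → Type*} {F : Type*}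
    [∀ k, NormedAddCommGroup (E k)] [∀ k, NormedSpace 𝕂 (E k)] [NormedAddCommGroup F]
    [NormedSpace 𝕂 F] (r : ℝ) (p : Fin m → ℝ) (C : ℝ) (N : ℕ)
    (T : ContinuousMultilinearMap 𝕂 E F) : Prop :=
  ∀ x : ∀ k, Fin N → E k,
    (∑ j : Fin m → Fin N, ‖T (fun k => x k (j k))‖ ^ r) ^ (1 / r) ≤
      C * ∏ k, weakNorm 𝕂 (p k) (x k)

namespace ContinuousMultilinearMap

variable {𝕜 : Type*} [NontriviallyNormedField 𝕜] {m : ℕ} {E : Fin (m + 1) → Type*}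
  [∀ k, NormedAddCommGroup (E k)] [∀ k, NormedSpace 𝕜 (E k)] {F : Type*} [NormedAddCommGroup F]
  [NormedSpace 𝕜 F] {N : ℕ}

/-- `y ↦ (T (x₀ j, y))ⱼ`, with values in `ℓ_ρ^N(F)`. -/
noncomputable def curryLeftLp (ρ : ENNReal) [Fact (1 ≤ ρ)] (T : ContinuousMultilinearMap 𝕜 E F)
    (x₀ : Fin N → E 0) :
    ContinuousMultilinearMap 𝕜 (fun k : Fin m => E k.succ) (PiLp ρ fun _ : Fin N => F) :=
  (PiLp.continuousLinearEquiv ρ 𝕜 fun _ : Fin N => F).symm.toContinuousLinearMap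
    |>.compContinuousMultilinearMap (pi fun j => T.curryLeft (x₀ j))

lemma norm_curryLeftLp_apply {ρ : ENNReal} [Fact (1 ≤ ρ)] (hρ : 0 < ρ.toReal)
    (T : ContinuousMultilinearMap 𝕜 E F) (x₀ : Fin N → E 0) (y : ∀ k : Fin m, E k.succ) :
    ‖T.curryLeftLp ρ x₀ y‖ = (∑ j, ‖T (Fin.cons (x₀ j) y)‖ ^ ρ.toReal) ^ (1 / ρ.toReal) := by
  rw [PiLp.norm_eq_sum hρ]
  rfl

end ContinuousMultilinearMap

lemma IsMultipleSummingAt.curryLeftLp {𝕂 : Type*} [RCLike 𝕂] {m : ℕ} {E : Fin (m + 1) → Type*}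
    [∀ k, NormedAddCommGroup (E k)] [∀ k, NormedSpace 𝕂 (E k)] {F : Type*}
    [NormedAddCommGroup F] [NormedSpace 𝕂 F] {N : ℕ} {r : ℝ} {p : Fin (m + 1) → ℝ} {C : ℝ}
    {T : ContinuousMultilinearMap 𝕂 E F} (hT : IsMultipleSummingAt 𝕂 r p C N T)
    {ρ : ENNReal} [Fact (1 ≤ ρ)] (hr : 0 < r) (hrρ : r ≤ ρ.toReal) (x₀ : Fin N → E 0) :
    IsMultipleSummingAt 𝕂 r (fun k => p k.succ) (C * weakNorm 𝕂 (p 0) x₀) N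
      (T.curryLeftLp ρ x₀) := by
  intro y
  have hrow : ∀ j : Fin m → Fin N, ‖T.curryLeftLp ρ x₀ (fun k => y k (j k))‖ ^ r ≤
      ∑ j₀, ‖T (Fin.cons (x₀ j₀) fun k => y k (j k))‖ ^ r := fun j => by
    have hsum : 0 ≤ ∑ j₀, ‖T (Fin.cons (x₀ j₀) fun k => y k (j k))‖ ^ r :=
      sum_nonneg fun _ _ => Real.rpow_nonneg (norm_nonneg _) _
    rw [ContinuousMultilinearMap.norm_curryLeftLp_apply (hr.trans_le hrρ)]
    calc _ ≤ ((∑ j₀, ‖T (Fin.cons (x₀ j₀) fun k => y k (j k))‖ ^ r) ^ (1 / r)) ^ r :=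
          Real.rpow_le_rpow (Real.rpow_nonneg (sum_nonneg fun _ _ => Real.rpow_nonneg
            (norm_nonneg _) _) _) (Lq_le_Lp_of_le (fun _ => norm_nonneg _) hr hrρ) hr.le
      _ = _ := by rw [one_div, Real.rpow_inv_rpow hsum hr.ne']
  have hsplit := Fintype.sum_fin_succ_pi fun j =>
    ‖T (fun k => (Fin.cons x₀ y : ∀ k, Fin N → E k) k (j k))‖ ^ r
  simp only [Fin.apply_cons_eq_cons, Fin.cons_zero, Fin.cons_succ] at hsplit
  calc _ ≤ (∑ j : Fin m → Fin N, ∑ j₀, ‖T (Fin.cons (x₀ j₀) fun k => y k (j k))‖ ^ r) ^ (1 / r) :=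
        Real.rpow_le_rpow (sum_nonneg fun _ _ => Real.rpow_nonneg (norm_nonneg _) _)
          (sum_le_sum fun j _ => hrow j) (one_div_nonneg.2 hr.le)
    _ ≤ C * ∏ k, weakNorm 𝕂 (p k) ((Fin.cons x₀ y : ∀ k, Fin N → E k) k) := by
        rw [sum_comm, ← hsplit]
        exact hT _
    _ = _ := by rw [Fin.prod_univ_succ, mul_assoc]; rfl

lemma one_div_add_le_of_eq_sub_sum_filter {m : ℕ} {r : ℝ} {s δ : Fin (m + 1) → ℝ}
    (hδ : ∀ k, 0 ≤ δ k)
    (hs : ∀ k, 1 / s k = 1 / r - ∑ i ∈ univ.filter (fun i => k ≤ i), δ i) :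
    1 / s 0 + δ 0 ≤ 1 / r ∧ ∀ k : Fin m, 1 / s 0 + δ 0 ≤ 1 / s k.succ := by
  have h₀ : 1 / s 0 + δ 0 = 1 / r - ∑ i : Fin m, δ i.succ := by
    rw [hs 0, filter_true_of_mem fun i _ => Fin.zero_le i, Fin.sum_univ_succ]
    ring
  refine ⟨?_, fun k => ?_⟩
  · linarith [sum_nonneg fun (i : Fin m) (_ : i ∈ univ) => hδ i.succ]
  · rw [h₀, hs k.succ, filter_le_eq_Ici, Fin.sum_Ici_succ, ← filter_le_eq_Ici]
    linarith [sum_le_sum_of_subset_of_nonneg (filter_subset (fun i => k ≤ i) univ)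
      fun i _ _ => hδ i.succ]

theorem mixedNorm_le_of_isMultipleSummingAt {𝕂 : Type*} [RCLike 𝕂] {N : ℕ} {r : ℝ}
    (hr : 1 ≤ r) :
    ∀ {m : ℕ} {E : Fin m → Type*} {F : Type*} [∀ k, NormedAddCommGroup (E k)]
      [∀ k, NormedSpace 𝕂 (E k)] [NormedAddCommGroup F] [NormedSpace 𝕂 F]
      {s p q : Fin m → ℝ} {C : ℝ} {T : ContinuousMultilinearMap 𝕂 E F},
      (∀ k, 0 < s k) → (∀ k, 0 < p k) → (∀ k, p k ≤ q k) →
      (∀ k, 1 / s k = 1 / r - ∑ i ∈ univ.filter (fun i => k ≤ i), (1 / p i - 1 / q i)) →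
      0 ≤ C → IsMultipleSummingAt 𝕂 r p C N T → ∀ x : ∀ k, Fin N → E k,
      mixedNorm m s (fun j => ‖T (fun k => x k (j k))‖) ≤ C * ∏ k, weakNorm 𝕂 (q k) (x k)
  | 0, _, _, _, _, _, _, _, _, _, _, _, _, _, _, _, _, hT, x => by
    have h := hT x
    rw [Fintype.sum_subsingleton _ fun k => (k.elim0 : Fin N), one_div,
      Real.rpow_rpow_inv (norm_nonneg _) (zero_lt_one.trans_le hr).ne'] at h
    simpa [mixedNorm] using h
  | m + 1, E, F, _, _, _, _, s, p, q, C, T, hs, hp, hpq, hks, hC, hT, x => by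
    have hδ : ∀ k, 0 ≤ 1 / p k - 1 / q k :=
      fun k => sub_nonneg.2 (one_div_le_one_div_of_le (hp k) (hpq k))
    have hks' : ∀ k : Fin m, 1 / s k.succ =
        1 / r - ∑ i ∈ univ.filter (fun i => k ≤ i), (1 / p i.succ - 1 / q i.succ) := fun k => by
      simpa [Finset.filter_le_eq_Ici, Fin.sum_Ici_succ] using hks k.succ
    obtain ⟨hρr, hρs⟩ := one_div_add_le_of_eq_sub_sum_filter hδ hks
    set ρ := (1 / s 0 + (1 / p 0 - 1 / q 0))⁻¹
    have hρ : 1 / ρ = 1 / s 0 + (1 / p 0 - 1 / q 0) := by rw [one_div ρ, inv_inv]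
    have hρ_pos : 0 < ρ := inv_pos.2 (add_pos_of_pos_of_nonneg (one_div_pos.2 (hs 0)) (hδ 0))
    have hrρ : r ≤ ρ := le_of_one_div_le_one_div hρ_pos (hρ ▸ hρr)
    have hsρ : ∀ k : Fin m, s k.succ ≤ ρ := fun k => le_of_one_div_le_one_div hρ_pos (hρ ▸ hρs k)
    have : Fact (1 ≤ ENNReal.ofReal ρ) := ⟨ENNReal.one_le_ofReal.2 (hr.trans hrρ)⟩
    have hρ' : (ENNReal.ofReal ρ).toReal = ρ := ENNReal.toReal_ofReal hρ_pos.le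
    have hrows : ∀ x₀ : Fin N → E 0,
        (∑ j₀, mixedNorm m (fun i => s i.succ)
          (fun j => ‖T (Fin.cons (x₀ j₀) fun k => x k.succ (j k))‖) ^ ρ) ^ (1 / ρ) ≤
          C * weakNorm 𝕂 (p 0) x₀ * ∏ k : Fin m, weakNorm 𝕂 (q k.succ) (x k.succ) := fun x₀ => by
      refine (Lp_mixedNorm_le_mixedNorm_Lp (fun i => hs i.succ) hsρ
        fun _ _ => norm_nonneg _).trans ?_
      have := mixedNorm_le_of_isMultipleSummingAt hr (fun i => hs i.succ) (fun i => hp i.succ)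
        (fun i => hpq i.succ) hks' (mul_nonneg hC (weakNorm_nonneg _ _))
        (hT.curryLeftLp (zero_lt_one.trans_le hr) (hρ'.symm ▸ hrρ) x₀) fun k => x k.succ
      simpa only [ContinuousMultilinearMap.norm_curryLeftLp_apply (hρ'.symm ▸ hρ_pos), hρ']
        using this
    rw [mixedNorm, Fin.prod_univ_succ, ← mul_assoc]
    simp only [Fin.apply_cons_eq_cons]
    obtain ⟨a, ha, hMa, hwa⟩ := exists_weight_Lp_le_Lr_mul_and_weakNorm_smul_le (𝕂 := 𝕂)
      (E := E 0) (fun j₀ => mixedNorm_nonneg _ fun j =>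
        norm_nonneg (T (Fin.cons (x 0 j₀) fun k => x k.succ (j k))))
      (hs 0) (hp 0) (hpq 0) hρ
    calc _ ≤ _ := hMa
      _ = (∑ j₀, mixedNorm m (fun i => s i.succ) (fun j =>
            ‖T (Fin.cons ((a j₀ : 𝕂) • x 0 j₀) fun k => x k.succ (j k))‖) ^ ρ) ^ (1 / ρ) := by
          simp only [T.cons_smul, norm_smul, RCLike.norm_ofReal, abs_of_nonneg (ha _),
            mixedNorm_const_mul (fun i => (hs i.succ).ne') (fun _ => norm_nonneg _) (ha _)]
      _ ≤ C * weakNorm 𝕂 (p 0) (fun j => (a j : 𝕂) • x 0 j) *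
            ∏ k : Fin m, weakNorm 𝕂 (q k.succ) (x k.succ) := hrows _
      _ ≤ _ := by
          gcongr
          · exact prod_nonneg fun k _ => weakNorm_nonneg _ _
          · exact hwa _

theorem stmt13_general (𝕂 : Type*) [RCLike 𝕂] (m : ℕ)
    (r : ℝ) (hr : 1 ≤ r) (s p q : Fin m → ℝ)
    (hs : ∀ k, 1 ≤ s k) (hp : ∀ k, 1 ≤ p k)
    (hqp : ∀ k, p k ≤ q k)
    (hks : ∀ k : Fin m,
      1 / s k - ∑ i ∈ univ.filter (fun i => k ≤ i), 1 / q i =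
        1 / r - ∑ i ∈ univ.filter (fun i => k ≤ i), 1 / p i)
    (E : Fin m → Type*) (F : Type*)
    [∀ k, NormedAddCommGroup (E k)] [∀ k, NormedSpace 𝕂 (E k)]
    [NormedAddCommGroup F] [NormedSpace 𝕂 F]
    (T : ContinuousMultilinearMap 𝕂 E F) (C : ℝ) (hC : 0 < C)
    (hT : ∀ (N : ℕ), 0 < N → ∀ x : ∀ k, Fin N → E k,
      (∑ j : Fin m → Fin N, ‖T (fun k => x k (j k))‖ ^ r) ^ (1 / r)
        ≤ C * ∏ k, weakNorm 𝕂 (p k) (x k))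
    (N : ℕ) (hN : 0 < N) (x : ∀ k, Fin N → E k) :
    mixedNorm m s (fun j => ‖T (fun k => x k (j k))‖)
      ≤ C * ∏ k, weakNorm 𝕂 (q k) (x k) :=
  mixedNorm_le_of_isMultipleSummingAt hr (fun k => zero_lt_one.trans_le (hs k))
    (fun k => zero_lt_one.trans_le (hp k)) hqp
    (fun k => by rw [sum_sub_distrib]; linarith [hks k]) hC.le (hT N hN) x

theorem stmt13 (𝕂 : Type*) [RCLike 𝕂] (m : ℕ) (hm : 1 ≤ m)
    (r : ℝ) (hr : 1 ≤ r) (s p q : Fin m → ℝ)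
    (hs : ∀ k, 1 ≤ s k) (hp : ∀ k, 1 ≤ p k) (hq : ∀ k, 1 ≤ q k)
    (hpos : 0 < 1 / r - (∑ k, 1 / p k) + ∑ k, 1 / q k)
    (hqp : ∀ k, p k ≤ q k)
    (hks : ∀ k : Fin m,
      1 / s k - ∑ i ∈ univ.filter (fun i => k ≤ i), 1 / q i =
        1 / r - ∑ i ∈ univ.filter (fun i => k ≤ i), 1 / p i)
    (E : Fin m → Type*) (F : Type*)
    [∀ k, NormedAddCommGroup (E k)] [∀ k, NormedSpace 𝕂 (E k)] [∀ k, CompleteSpace (E k)]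
    [NormedAddCommGroup F] [NormedSpace 𝕂 F] [CompleteSpace F]
    (T : ContinuousMultilinearMap 𝕂 E F) (C : ℝ) (hC : 0 < C)
    (hT : ∀ (N : ℕ), 0 < N → ∀ x : ∀ k, Fin N → E k,
      (∑ j : Fin m → Fin N, ‖T (fun k => x k (j k))‖ ^ r) ^ (1 / r)
        ≤ C * ∏ k, weakNorm 𝕂 (p k) (x k))
    (N : ℕ) (hN : 0 < N) (x : ∀ k, Fin N → E k) :
    mixedNorm m s (fun j => ‖T (fun k => x k (j k))‖)
      ≤ C * ∏ k, weakNorm 𝕂 (q k) (x k) :=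
  stmt13_general 𝕂 m r hr s p q hs hp hqp hks E F T C hC hT N hN x
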